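/- Fix ω₁, ω₂ ∈ ℂ \ {0} that are linearly independent over ℝ. For n ≥ 1 set ω₁ₙ = ω₁ + nω₂, τₙ = ω₂/ω₁ₙ, and define Lₙ(z) = exp(−2πiτₙ)·z + ω₂. Then as n → ∞, Lₙ converges to the parabolic transformation L(z) = z + ω₂, and Lₙ^{−n} converges to K(z) = z + ω₁. -/

import Mathlib

open Filter Topology

private lemma exp_slope : Tendsto (fun x : ℂ => (Complex.exp x - 1) / x)
    (𝓝[≠] (0 : ℂ)) (𝓝 1) := by
  have h := (Complex.hasDerivAt_exp 0)
  rw [hasDerivAt_iff_tendsto_slope] at h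
  simp only [Complex.exp_zero] at h
  refine h.congr' ?_
  filter_upwards [self_mem_nhdsWithin] with x hx
  simp [slope_def_field, Complex.exp_zero]

private lemma iter_affine (r c : ℂ) (hr : r ≠ 1) (n : ℕ) (z : ℂ) :
    (fun w => r * w + c)^[n] z = r ^ n * z + c * (r ^ n - 1) / (r - 1) := by
  induction n with
  | zero => simp
  | succ n ih =>
    rw [Function.iterate_succ_apply', ih]
    have h : r - 1 ≠ 0 := sub_ne_zero.mpr hr
    field_simp
    ring

private lemma alg (a d B C E F z : ℂ) (hB : B ≠ 0) (hC : C ≠ 0)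
    (hE : E - 1 ≠ 0) (h : d * B = a * C) :
    F * z + a * E * ((F - 1) / (-B)) / ((E - 1) / C) =
      F * z + -(E * d) * (F - 1) / (E - 1) := by
  field_simp
  linear_combination (E * (F - 1)) * h

/-- The Jørgensen–Marden example: with `τₙ = ω₂/(ω₁ + nω₂)` and
`Lₙ(z) = exp(−2πiτₙ)z + ω₂`, the maps `Lₙ` converge to the translation `z ↦ z + ω₂`
while the maps `Lₙ⁻ⁿ` converge to the translation `z ↦ z + ω₁`. -/
theorem jorgensen_marden_example (ω₁ ω₂ : ℂ) (h₁ : ω₁ ≠ 0) (h₂ : ω₂ ≠ 0)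
    (hli : LinearIndependent ℝ ![ω₁, ω₂]) :
    (∀ z : ℂ, Tendsto (fun n : ℕ =>
        Complex.exp (-2 * Real.pi * Complex.I * (ω₂ / (ω₁ + n * ω₂))) * z + ω₂)
        atTop (𝓝 (z + ω₂))) ∧
    (∀ z : ℂ, Tendsto (fun n : ℕ =>
        (fun w : ℂ =>
          (w - ω₂) / Complex.exp (-2 * Real.pi * Complex.I * (ω₂ / (ω₁ + n * ω₂))))^[n] z)
        atTop (𝓝 (z + ω₁))) := by
  have hpair : ∀ a b : ℝ, a • ω₁ + b • ω₂ = 0 → a = 0 ∧ b = 0 := by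
    intro a b hab
    exact LinearIndependent.pair_iff.mp hli a b hab
  set W : ℕ → ℂ := fun n => ω₁ + n * ω₂ with hWdef
  have hW : ∀ n : ℕ, W n ≠ 0 := by
    intro n hn
    have : (1 : ℝ) • ω₁ + (n : ℝ) • ω₂ = 0 := by
      simpa [Complex.real_smul] using hn
    exact one_ne_zero ((hpair 1 n this).1)
  -- norm of W n tends to infinity
  have hWnorm : Tendsto (fun n : ℕ => ‖W n‖) atTop atTop := by
    have hlow : ∀ n : ℕ, (n : ℝ) * ‖ω₂‖ - ‖ω₁‖ ≤ ‖W n‖ := by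
      intro n
      have := norm_sub_norm_le ((n : ℂ) * ω₂) (-ω₁)
      simp only [norm_neg, norm_mul, Complex.norm_natCast] at this
      calc (n : ℝ) * ‖ω₂‖ - ‖ω₁‖ ≤ ‖(n : ℂ) * ω₂ - -ω₁‖ := by
            simpa [norm_mul] using this
        _ = ‖W n‖ := by rw [hWdef]; ring_nf
    refine tendsto_atTop_mono hlow ?_
    apply tendsto_atTop_add_const_right
    exact Tendsto.atTop_mul_const (norm_pos_iff.mpr h₂) tendsto_natCast_atTop_atTop
  have hinvW : Tendsto (fun n : ℕ => (W n)⁻¹) atTop (𝓝 0) := by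
    rw [tendsto_zero_iff_norm_tendsto_zero]
    simp only [norm_inv]; exact hWnorm.inv_tendsto_atTop
  have hdiv : ∀ cc : ℂ, Tendsto (fun n : ℕ => cc / W n) atTop (𝓝 0) := by
    intro cc
    simp only [div_eq_mul_inv]
    simpa using hinvW.const_mul cc
  -- constants
  set b : ℕ → ℂ := fun n => 2 * Real.pi * Complex.I * (ω₁ / W n) with hbdef
  set c : ℕ → ℂ := fun n => 2 * Real.pi * Complex.I * (ω₂ / W n) with hcdef
  have hb0 : Tendsto b atTop (𝓝 0) := by
    simpa using (hdiv ω₁).const_mul (2 * (Real.pi : ℂ) * Complex.I)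
  have hc0 : Tendsto c atTop (𝓝 0) := by
    simpa using (hdiv ω₂).const_mul (2 * (Real.pi : ℂ) * Complex.I)
  have hpiI : (2 : ℂ) * Real.pi * Complex.I ≠ 0 := by
    simp [Real.pi_ne_zero, Complex.I_ne_zero]
  have hbne : ∀ n, b n ≠ 0 := fun n =>
    mul_ne_zero hpiI (div_ne_zero h₁ (hW n))
  have hcne : ∀ n, c n ≠ 0 := fun n =>
    mul_ne_zero hpiI (div_ne_zero h₂ (hW n))
  -- exp (c n) ≠ 1
  have hexpc : ∀ n : ℕ, Complex.exp (c n) ≠ 1 := by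
    intro n hc1
    rw [Complex.exp_eq_one_iff] at hc1
    obtain ⟨k, hk⟩ := hc1
    have hk' : ω₂ / W n = (k : ℂ) := by
      refine mul_left_cancel₀ hpiI ?_
      rw [hcdef] at hk
      simpa [mul_comm] using hk
    rw [div_eq_iff (hW n)] at hk'
    have : ((k : ℝ)) • ω₁ + ((k : ℝ) * n - 1) • ω₂ = 0 := by
      simp only [Complex.real_smul]
      push_cast
      rw [hWdef] at hk'
      linear_combination -hk'
    obtain ⟨hk0, hk1⟩ := hpair _ _ this
    rw [hk0] at hk1
    simp at hk1
  -- First part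
  have hpart1 : ∀ z : ℂ, Tendsto (fun n : ℕ =>
      Complex.exp (-2 * Real.pi * Complex.I * (ω₂ / (ω₁ + n * ω₂))) * z + ω₂)
      atTop (𝓝 (z + ω₂)) := by
    intro z
    have h : Tendsto (fun n : ℕ => -2 * Real.pi * Complex.I * (ω₂ / W n))
        atTop (𝓝 0) := by
      simpa using (hdiv ω₂).const_mul (-2 * (Real.pi : ℂ) * Complex.I)
    have := ((h.cexp.mul_const z).add_const ω₂)
    simpa using this
  refine ⟨hpart1, ?_⟩
  -- Second part
  intro z
  -- closed form for the iterate
  have hform : ∀ n : ℕ,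
      (fun w : ℂ => (w - ω₂) / Complex.exp (-2 * Real.pi * Complex.I * (ω₂ / (ω₁ + n * ω₂))))^[n] z
      = Complex.exp (- b n) * z
        + ω₁ * Complex.exp (c n) * ((Complex.exp (- b n) - 1) / (- b n))
          / ((Complex.exp (c n) - 1) / (c n)) := by
    intro n
    have hfn : (fun w : ℂ => (w - ω₂) / Complex.exp (-2 * Real.pi * Complex.I * (ω₂ / (ω₁ + n * ω₂))))
        = fun w : ℂ => Complex.exp (c n) * w + (- (Complex.exp (c n) * ω₂)) := by
      funext w
      rw [div_eq_mul_inv, ← Complex.exp_neg]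
      have : -(-2 * Real.pi * Complex.I * (ω₂ / (ω₁ + n * ω₂))) = c n := by
        rw [hcdef, hWdef]; ring
      rw [this]; ring
    rw [hfn, iter_affine _ _ (hexpc n)]
    have hpow : Complex.exp (c n) ^ n = Complex.exp (- b n) := by
      rw [← Complex.exp_nat_mul]
      have hnc : (n : ℂ) * c n = 2 * Real.pi * Complex.I - b n := by
        have hWn := hW n
        rw [hcdef, hbdef]
        have key : (n : ℂ) * ω₂ = W n - ω₁ := by rw [hWdef]; ring
        field_simp
        linear_combination (2 * (Real.pi : ℂ) * Complex.I) * key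
      rw [hnc, Complex.exp_sub, Complex.exp_two_pi_mul_I, Complex.exp_neg]
      simp
    rw [hpow]
    have hre : Complex.exp (c n) - 1 ≠ 0 := sub_ne_zero.mpr (hexpc n)
    have hωb : ω₂ * b n = ω₁ * c n := by
      rw [hbdef, hcdef]; ring
    exact (alg ω₁ ω₂ (b n) (c n) (Complex.exp (c n)) (Complex.exp (- b n)) z
      (hbne n) (hcne n) hre hωb).symm
  -- limits of the pieces
  have hslope : ∀ (u : ℕ → ℂ), Tendsto u atTop (𝓝 0) → (∀ n, u n ≠ 0) →
      Tendsto (fun n => (Complex.exp (u n) - 1) / u n) atTop (𝓝 1) := by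
    intro u hu hune
    exact exp_slope.comp (tendsto_nhdsWithin_iff.mpr ⟨hu, Eventually.of_forall hune⟩)
  have hA : Tendsto (fun n => (Complex.exp (- b n) - 1) / (- b n)) atTop (𝓝 1) :=
    hslope _ (by simpa using hb0.neg) (fun n => neg_ne_zero.mpr (hbne n))
  have hB : Tendsto (fun n => (Complex.exp (c n) - 1) / (c n)) atTop (𝓝 1) :=
    hslope _ hc0 hcne
  have hEb : Tendsto (fun n => Complex.exp (- b n)) atTop (𝓝 1) := by
    have := (hb0.neg).cexp; simpa using this
  have hEc : Tendsto (fun n => Complex.exp (c n)) atTop (𝓝 1) := by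
    have := hc0.cexp; simpa using this
  have htot : Tendsto (fun n : ℕ => Complex.exp (- b n) * z
        + ω₁ * Complex.exp (c n) * ((Complex.exp (- b n) - 1) / (- b n))
          / ((Complex.exp (c n) - 1) / (c n))) atTop (𝓝 (z + ω₁)) := by
    have := (hEb.mul_const z).add
      ((((hEc.const_mul ω₁).mul hA).div hB one_ne_zero))
    simpa using this
  exact htot.congr (fun n => (hform n).symm)
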